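/- arXiv:2002.04443 — 8 statements merged into one kernel-verified Lean document; each statement's English description precedes it below -/
import Mathlib

section
/- Let G be a finite group and p a prime dividing |G|. Then the number of conjugacy classes of p-elements of G is at most the number of conjugacy classes of a Sylow p-subgroup P of G, which in turn is at most |P|. -/
/-!
Every `p`-element generates a `p`-subgroup, which lies in some Sylow `p`-subgroup; as all Sylow
`p`-subgroups are conjugate, every `p`-element of `G` is conjugate into the fixed Sylow subgroup
`P`. Hence `ConjClasses P → ConjClasses G` maps onto the classes of `p`-elements, and
`ConjClasses P` is in turn a quotient of `P`.
-/

/-- The number of conjugacy classes of `p`-elements of `G`. -/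
noncomputable def kp (p : ℕ) (G : Type*) [Group G] : ℕ :=
  Nat.card {c : ConjClasses G // ∀ g ∈ c.carrier, ∃ n : ℕ, orderOf g = p ^ n}

open Pointwise

section

variable {G : Type*} [Group G] {p : ℕ}

theorem IsConj.orderOf_eq {a b : G} (h : IsConj a b) : orderOf a = orderOf b := by
  obtain ⟨c, hc⟩ := h
  exact SemiconjBy.orderOf_eq _ hc

theorem isPGroup_zpowers_of_orderOf_eq_pow {g : G} {n : ℕ} (hg : orderOf g = p ^ n) :
    IsPGroup p (Subgroup.zpowers g) :=
  IsPGroup.of_card ((Nat.card_zpowers g).trans hg)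

theorem Sylow.exists_isConj_mem_of_orderOf_eq_pow [Fact p.Prime] [Finite (Sylow p G)]
    (P : Sylow p G) {g : G} {n : ℕ} (hg : orderOf g = p ^ n) :
    ∃ x ∈ (P : Subgroup G), IsConj g x := by
  obtain ⟨Q, hgQ⟩ := (isPGroup_zpowers_of_orderOf_eq_pow hg).exists_le_sylow
  obtain ⟨c, rfl⟩ := MulAction.exists_smul_eq G Q P
  refine ⟨c * g * c⁻¹, ?_, isConj_iff.mpr ⟨c, rfl⟩⟩
  rw [Sylow.coe_subgroup_smul]
  exact Subgroup.smul_mem_pointwise_smul g (MulAut.conj c) _ (hgQ (Subgroup.mem_zpowers g))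

theorem IsPGroup.exists_orderOf_eq_pow_of_isConj [Fact p.Prime] {H : Subgroup G}
    (hH : IsPGroup p H) {x : H} {g : G} (h : IsConj (x : G) g) : ∃ n : ℕ, orderOf g = p ^ n := by
  obtain ⟨n, hn⟩ := IsPGroup.iff_orderOf.mp hH x
  exact ⟨n, by rw [← h.orderOf_eq, Subgroup.orderOf_coe, hn]⟩

theorem kp_le_card_conjClasses_sylow [Fact p.Prime] [Finite G] (P : Sylow p G) :
    kp p G ≤ Nat.card (ConjClasses (P : Subgroup G)) := by
  have mapsTo : ∀ c : ConjClasses (P : Subgroup G),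
      ∀ g ∈ (c.map (P : Subgroup G).subtype).carrier, ∃ n : ℕ, orderOf g = p ^ n := by
    rintro c g hg
    obtain ⟨x, rfl⟩ := c.exists_rep
    have hxg : IsConj (x : G) g :=
      (ConjClasses.mk_eq_mk_iff_isConj.mp (ConjClasses.mem_carrier_iff_mk_eq.mp hg)).symm
    exact P.isPGroup'.exists_orderOf_eq_pow_of_isConj hxg
  refine Nat.card_le_card_of_surjective (fun c => ⟨c.map (P : Subgroup G).subtype, mapsTo c⟩) ?_
  rintro ⟨c, hc⟩
  obtain ⟨g, rfl⟩ := c.exists_rep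
  obtain ⟨n, hn⟩ := hc g ConjClasses.mem_carrier_mk
  obtain ⟨x, hxP, hgx⟩ := P.exists_isConj_mem_of_orderOf_eq_pow hn
  exact ⟨ConjClasses.mk ⟨x, hxP⟩, Subtype.ext (ConjClasses.mk_eq_mk_iff_isConj.mpr hgx.symm)⟩

theorem card_conjClasses_le_card [Finite G] : Nat.card (ConjClasses G) ≤ Nat.card G :=
  Nat.card_le_card_of_surjective ConjClasses.mk ConjClasses.mk_surjective

end

theorem stmt_0_general {G : Type*} [Group G] [Finite G] (p : ℕ) [Fact p.Prime]
    (P : Sylow p G) :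
    kp p G ≤ Nat.card (ConjClasses ↥(P : Subgroup G)) ∧
      Nat.card (ConjClasses ↥(P : Subgroup G)) ≤ Nat.card ↥(P : Subgroup G) :=
  ⟨kp_le_card_conjClasses_sylow P, card_conjClasses_le_card⟩

theorem stmt_0 {G : Type*} [Group G] [Finite G] (p : ℕ) [Fact p.Prime]
    (hdvd : p ∣ Nat.card G) (P : Sylow p G) :
    kp p G ≤ Nat.card (ConjClasses ↥(P : Subgroup G)) ∧
      Nat.card (ConjClasses ↥(P : Subgroup G)) ≤ Nat.card ↥(P : Subgroup G) :=
  stmt_0_general p P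
end

section
/- Let G be a finite group with Sylow p-subgroup P and let x ∈ P satisfy x^G ∩ P = {x}. Then C_G(x) controls p-fusion in G: P ≤ C_G(x), and whenever y, y^g ∈ P for some g ∈ G, there exists h ∈ C_G(x) with y^g = y^h. -/
/-!
Call `x ∈ P` weakly closed if its only `G`-conjugate in `P` is `x` itself. Then every element
conjugating `x` into `P`, in particular every element of `P`, centralizes `x`, and the same holds
for every Sylow subgroup containing `x`, since such a subgroup is `P` conjugated by an element
centralizing `x`. Given `y, z = y ^ g ∈ P`, both `x` and `x ^ g` are `p`-elements of `C_G(z)`;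
Sylow's theorem in `C_G(z)` moves `x ^ g` by some `c ∈ C_G(z)` into a Sylow subgroup of `G` that
contains `x`, so `g c` centralizes `x` and conjugates `y` to `z ^ c = z`.
-/

open Subgroup

section

variable {G : Type*} [Group G]

theorem mem_centralizer_of_conj_mem {S : Set G} {x a : G}
    (hx : {y : G | IsConj x y} ∩ S = {x}) (ha : a⁻¹ * x * a ∈ S) :
    a ∈ centralizer {x} := by
  have hconj : a⁻¹ * x * a ∈ {y : G | IsConj x y} ∩ S :=
    ⟨isConj_iff.mpr ⟨a⁻¹, by group⟩, ha⟩
  rw [hx, Set.mem_singleton_iff] at hconj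
  rw [mem_centralizer_singleton_iff]
  calc a * x = a * (a⁻¹ * x * a) := by rw [hconj]
    _ = x * a := by group

theorem le_centralizer_of_conj_inter_eq_singleton {H : Subgroup G} {x : G} (hxH : x ∈ H)
    (hx : {y : G | IsConj x y} ∩ H = {x}) : H ≤ centralizer {x} := fun _ ha =>
  mem_centralizer_of_conj_mem hx (mul_mem (mul_mem (inv_mem ha) hxH) ha)

theorem Sylow.mem_smul_iff {p : ℕ} {P : Sylow p G} {g x : G} :
    x ∈ g • P ↔ g⁻¹ * x * g ∈ P := by
  rw [← SetLike.mem_coe, Sylow.coe_smul, Set.mem_smul_set_iff_inv_smul_mem]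
  simp

variable [Finite G] {p : ℕ} [Fact p.Prime]

theorem Sylow.mem_centralizer_of_conj_mem {P Q : Sylow p G} {x a : G}
    (hx : {y : G | IsConj x y} ∩ (P : Subgroup G) = {x}) (hxQ : x ∈ Q)
    (ha : a⁻¹ * x * a ∈ Q) : a ∈ centralizer {x} := by
  obtain ⟨d, rfl⟩ := MulAction.exists_smul_eq G P Q
  rw [Sylow.mem_smul_iff] at hxQ ha
  have hd : d ∈ centralizer {x} := _root_.mem_centralizer_of_conj_mem hx (by simpa using hxQ)
  have had : a * d ∈ centralizer {x} :=
    _root_.mem_centralizer_of_conj_mem hx (by simpa [mul_assoc] using ha)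
  simpa using mul_mem had (inv_mem hd)

theorem exists_sylow_mem_and_conj_mem {K : Subgroup G} {a b : G} (ha : a ∈ K) (hb : b ∈ K)
    (hpa : IsPGroup p (zpowers a)) (hpb : IsPGroup p (zpowers b)) :
    ∃ c ∈ K, ∃ Q : Sylow p G, a ∈ Q ∧ c⁻¹ * b * c ∈ Q := by
  obtain ⟨R, hR⟩ := (hpa.comap_subtype (K := K)).exists_le_sylow
  obtain ⟨S, hS⟩ := (hpb.comap_subtype (K := K)).exists_le_sylow
  obtain ⟨c, rfl⟩ := MulAction.exists_smul_eq K R S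
  obtain ⟨Q, hQ⟩ := (R.isPGroup'.map K.subtype).exists_le_sylow
  have haR : (⟨a, ha⟩ : K) ∈ R := hR (mem_zpowers a)
  have hbS : (⟨b, hb⟩ : K) ∈ c • R := hS (mem_zpowers b)
  rw [Sylow.mem_smul_iff] at hbS
  exact ⟨c, c.2, Q, hQ ⟨_, haR, rfl⟩, hQ ⟨_, hbS, rfl⟩⟩

end

theorem stmt_3 {G : Type*} [Group G] [Finite G] (p : ℕ) [Fact p.Prime]
    (P : Sylow p G) (x : G) (hx : x ∈ (P : Subgroup G))
    (h : {y : G | IsConj x y} ∩ (P : Subgroup G) = {x}) :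
    (P : Subgroup G) ≤ Subgroup.centralizer {x} ∧
      ∀ y g : G, y ∈ (P : Subgroup G) → g⁻¹ * y * g ∈ (P : Subgroup G) →
        ∃ h ∈ Subgroup.centralizer {x}, g⁻¹ * y * g = h⁻¹ * y * h := by
  have hPx : (P : Subgroup G) ≤ centralizer {x} := le_centralizer_of_conj_inter_eq_singleton hx h
  refine ⟨hPx, fun y g hy hz => ?_⟩
  set z := g⁻¹ * y * g
  have hxz : x ∈ centralizer {z} :=
    mem_centralizer_singleton_iff.mpr (mem_centralizer_singleton_iff.mp (hPx hz)).symm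
  have hxgz : g⁻¹ * x * g ∈ centralizer {z} := by
    have hyx : Commute y x := mem_centralizer_singleton_iff.mp (hPx hy)
    simpa [mem_centralizer_singleton_iff, z] using (hyx.map (MulAut.conj g⁻¹)).eq.symm
  have hpx : IsPGroup p (zpowers x) := P.isPGroup'.to_le (zpowers_le.mpr hx)
  have hpxg : IsPGroup p (zpowers (g⁻¹ * x * g)) := by
    have hxg : g⁻¹ * x * g ∈ g⁻¹ • P := Sylow.mem_smul_iff.mpr (by group; exact hx)
    exact (g⁻¹ • P).isPGroup'.to_le (zpowers_le.mpr hxg)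
  obtain ⟨c, hcz, Q, hxQ, hxgQ⟩ := exists_sylow_mem_and_conj_mem hxz hxgz hpx hpxg
  refine ⟨g * c, P.mem_centralizer_of_conj_mem h hxQ (by simpa [mul_assoc] using hxgQ), ?_⟩
  have hcz' : c * z = z * c := mem_centralizer_singleton_iff.mp hcz
  calc z = c⁻¹ * z * c := by rw [mul_assoc, ← hcz', inv_mul_cancel_left]
    _ = (g * c)⁻¹ * y * (g * c) := by simp only [z]; group
end

section
/- Let G be a finite group and π a nonempty set of primes, and let μ ⊆ π be a nonempty subset. Then d_π(G) ≤ d_μ(G) ≤ 1, where d_σ(G) = k_σ(G)/|G|_σ, k_σ(G) is the number of conjugacy classes of σ-elements of G, and |G|_σ is the σ-part of |G|. -/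
/-!
Every π-element `g` factors as `g = y * z` with `y` a μ-element and `z` a (π \ μ)-element commuting
with `y` (both are powers of `g`, by Bézout for the coprime μ- and μᶜ-parts of its order). Sending
the class of `g` to the class of `y`, the π-classes lying over the class of `r` are classes of
elements `r * z` with `z` a (π \ μ)-element of `C_G(r)`, and `z ↦ r * z` respects conjugacy in
`C_G(r)`. Hence `k_π(G) ≤ k_μ(G) · max_r k_{π \ μ}(C_G(r))`. For one prime `p` every `p`-element is
conjugate into a Sylow `p`-subgroup, so `k_p(G) ≤ |G|_p`; peeling off one prime at a time gives
`k_σ(G) ≤ |G|_σ` for every `σ`. Both inequalities follow from `k_π(G) ≤ k_μ(G) |G|_{π \ μ}` and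
`|G|_π = |G|_μ |G|_{π \ μ}`.
-/

open scoped Classical

/-- The number of conjugacy classes of `π`-elements of `G`. -/
noncomputable def kpi (π : Set ℕ) (G : Type*) [Group G] : ℕ :=
  Nat.card {c : ConjClasses G // ∀ g ∈ c.carrier, ∀ q : ℕ, q.Prime → q ∣ orderOf g → q ∈ π}

/-- The `π`-part of a natural number. -/
noncomputable def piPart (π : Set ℕ) (n : ℕ) : ℕ :=
  n.factorization.prod fun q k => if q ∈ π then q ^ k else 1

section piPart

variable (σ : Set ℕ) (n : ℕ)

lemma piPart_eq_prod_filter : piPart σ n = (n.factorization.filter (· ∈ σ)).prod (· ^ ·) := by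
  rw [Finsupp.prod_filter_index, Finsupp.support_filter, Finset.prod_filter]
  rfl

lemma factorization_piPart : (piPart σ n).factorization = n.factorization.filter (· ∈ σ) := by
  rw [piPart_eq_prod_filter]
  refine Nat.prod_pow_factorization_eq_self fun q hq => ?_
  rw [Finsupp.support_filter, Finset.mem_filter] at hq
  exact Nat.prime_of_mem_primeFactors hq.1

lemma piPart_ne_zero : piPart σ n ≠ 0 := by
  rw [piPart, Finsupp.prod, Finset.prod_ne_zero_iff]
  intro q hq
  have hq0 := (Nat.prime_of_mem_primeFactors hq).ne_zero
  split_ifs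
  · exact pow_ne_zero _ hq0
  · exact one_ne_zero

lemma piPart_pos : 0 < piPart σ n :=
  Nat.pos_of_ne_zero (piPart_ne_zero σ n)

variable {σ n}

lemma piPart_mul_piPart_compl (hn : n ≠ 0) : piPart σ n * piPart σᶜ n = n := by
  refine Nat.eq_of_factorization_eq (mul_ne_zero (piPart_ne_zero _ _) (piPart_ne_zero _ _)) hn
    fun q => ?_
  rw [Nat.factorization_mul (piPart_ne_zero _ _) (piPart_ne_zero _ _)]
  simp [factorization_piPart]

lemma piPart_inter_mul_piPart_diff (s t : Set ℕ) :
    piPart (s ∩ t) n * piPart (s \ t) n = piPart s n := by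
  refine Nat.eq_of_factorization_eq (mul_ne_zero (piPart_ne_zero _ _) (piPart_ne_zero _ _))
    (piPart_ne_zero _ _) fun q => ?_
  rw [Nat.factorization_mul (piPart_ne_zero _ _) (piPart_ne_zero _ _)]
  by_cases hs : q ∈ s <;> by_cases ht : q ∈ t <;>
    simp [factorization_piPart, hs, ht]

lemma mem_of_prime_dvd_piPart {q : ℕ} (hq : q.Prime) (h : q ∣ piPart σ n) : q ∈ σ := by
  have := (hq.dvd_iff_one_le_factorization (piPart_ne_zero σ n)).1 h
  by_contra hσ
  simp [factorization_piPart, hσ] at this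

lemma dvd_piPart {d : ℕ} (hn : n ≠ 0) (hdn : d ∣ n) (hd : ∀ q, q.Prime → q ∣ d → q ∈ σ) :
    d ∣ piPart σ n := by
  have hd0 : d ≠ 0 := ne_zero_of_dvd_ne_zero hn hdn
  refine (Nat.factorization_le_iff_dvd hd0 (piPart_ne_zero σ n)).1 fun q => ?_
  rw [factorization_piPart, Finsupp.filter_apply]
  split_ifs with hq
  · exact (Nat.factorization_le_iff_dvd hd0 hn).2 hdn q
  · by_contra h
    have hq0 : d.factorization q ≠ 0 := by omega
    exact hq (hd q (Nat.prime_of_mem_primeFactors (Finsupp.mem_support_iff.2 hq0))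
      (Nat.dvd_of_factorization_pos hq0))

lemma piPart_dvd_piPart {m : ℕ} (hmn : m ∣ n) (hn : n ≠ 0) : piPart σ m ∣ piPart σ n :=
  dvd_piPart hn ((Dvd.intro _ (piPart_mul_piPart_compl (ne_zero_of_dvd_ne_zero hn hmn))).trans hmn)
    fun _ hq hqd => mem_of_prime_dvd_piPart hq hqd

end piPart

lemma Nat.card_le_card_mul_of_card_fiber_le {α β : Type*} [Finite α] [Finite β] (f : α → β)
    {B : ℕ} (h : ∀ b, Nat.card {a // f a = b} ≤ B) : Nat.card α ≤ Nat.card β * B := by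
  have := Fintype.ofFinite β
  calc Nat.card α = Nat.card (Σ b, {a // f a = b}) := Nat.card_congr (Equiv.sigmaFiberEquiv f).symm
    _ = ∑ b, Nat.card {a // f a = b} := Nat.card_sigma
    _ ≤ ∑ _b : β, B := Finset.sum_le_sum fun b _ => h b
    _ = Nat.card β * B := by simp [Nat.card_eq_fintype_card]

section PiElement

variable {G : Type*} [Group G]

def IsPiElement (σ : Set ℕ) (g : G) : Prop :=
  ∀ q : ℕ, q.Prime → q ∣ orderOf g → q ∈ σ

lemma IsConj.isPiElement_iff {σ : Set ℕ} {a b : G} (h : IsConj a b) :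
    IsPiElement σ a ↔ IsPiElement σ b := by
  obtain ⟨c, hc⟩ := h
  rw [IsPiElement, IsPiElement, hc.orderOf_eq]

lemma isPiElement_of_pow_eq_one {σ : Set ℕ} {g : G} {n : ℕ} (hg : g ^ n = 1)
    (hn : ∀ q : ℕ, q.Prime → q ∣ n → q ∈ σ) : IsPiElement σ g :=
  fun q hq hqg => hn q hq (hqg.trans (orderOf_dvd_of_pow_eq_one hg))

lemma exists_commute_mul_eq_of_pow_mul_eq_one {m k : ℕ} (hmk : m.Coprime k) {g : G}
    (hg : g ^ (m * k) = 1) : ∃ y z : G, Commute y z ∧ y * z = g ∧ y ^ m = 1 ∧ z ^ k = 1 := by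
  obtain ⟨a, b, hab⟩ := Nat.isCoprime_iff_coprime.2 hmk
  have hpow (c : ℤ) {l l' : ℕ} (h : l' * l = m * k) : (g ^ (c * l')) ^ l = 1 := by
    rw [← zpow_natCast, ← zpow_mul, mul_assoc, ← Nat.cast_mul, h, mul_comm, zpow_mul,
      zpow_natCast, hg, one_zpow]
  refine ⟨g ^ (b * k), g ^ (a * m), Commute.zpow_zpow_self g _ _, ?_, ?_, ?_⟩
  · rw [← zpow_add, show b * (k : ℤ) + a * m = 1 by linarith, zpow_one]
  · exact hpow b (mul_comm k m)
  · exact hpow a rfl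

lemma IsPiElement.exists_commute_mul_eq {π : Set ℕ} (μ : Set ℕ) {g : G} (hfin : IsOfFinOrder g)
    (hg : IsPiElement π g) :
    ∃ y z : G, Commute y z ∧ y * z = g ∧ IsPiElement μ y ∧ IsPiElement (π \ μ) z := by
  have hn : orderOf g ≠ 0 := hfin.orderOf_pos.ne'
  have hcop : (piPart μ (orderOf g)).Coprime (piPart μᶜ (orderOf g)) :=
    Nat.coprime_of_dvd fun q hq h₁ h₂ =>
      mem_of_prime_dvd_piPart hq h₂ (mem_of_prime_dvd_piPart hq h₁)
  obtain ⟨y, z, hyz, hg', hy, hz⟩ := exists_commute_mul_eq_of_pow_mul_eq_one hcop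
    (by rw [piPart_mul_piPart_compl hn, pow_orderOf_eq_one])
  refine ⟨y, z, hyz, hg', isPiElement_of_pow_eq_one hy fun q hq => mem_of_prime_dvd_piPart hq,
    isPiElement_of_pow_eq_one hz fun q hq hqk => ⟨?_, mem_of_prime_dvd_piPart hq hqk⟩⟩
  exact hg q hq (hqk.trans (Dvd.intro_left _ (piPart_mul_piPart_compl hn)))

end PiElement

section ConjClasses

variable {G : Type*} [Group G]

abbrev PiClasses (σ : Set ℕ) (G : Type*) [Group G] :=
  {c : ConjClasses G // ∀ g ∈ c.carrier, IsPiElement σ g}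

lemma forall_mem_carrier_mk_iff {σ : Set ℕ} {g : G} :
    (∀ h ∈ (ConjClasses.mk g).carrier, IsPiElement σ h) ↔ IsPiElement σ g :=
  ⟨fun h => h g ConjClasses.mem_carrier_mk, fun hg _ hh =>
    (ConjClasses.mk_eq_mk_iff_isConj.1 (ConjClasses.mem_carrier_iff_mk_eq.1 hh)).isPiElement_iff.2
      hg⟩

def PiClasses.mk {σ : Set ℕ} {g : G} (hg : IsPiElement σ g) : PiClasses σ G :=
  ⟨ConjClasses.mk g, forall_mem_carrier_mk_iff.2 hg⟩

lemma PiClasses.exists_rep {σ : Set ℕ} (c : PiClasses σ G) :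
    ∃ g, IsPiElement σ g ∧ ConjClasses.mk g = c.1 := by
  obtain ⟨g, hg⟩ := c.1.exists_rep
  exact ⟨g, c.2 g (hg ▸ ConjClasses.mem_carrier_mk), hg⟩

lemma IsConj.mul_left_of_mem_centralizer {r : G} {z₁ z₂ : Subgroup.centralizer {r}}
    (h : IsConj z₁ z₂) : IsConj (r * z₁) (r * (z₂ : G)) := by
  obtain ⟨w, rfl⟩ := isConj_iff.1 h
  have hwr : (w : G) * r = r * w := Subgroup.mem_centralizer_singleton_iff.1 w.2
  refine isConj_iff.2 ⟨w, ?_⟩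
  simp only [Subgroup.coe_mul, Subgroup.coe_inv, ← mul_assoc, hwr]

lemma exists_mul_mem_centralizer {y z r : G} (hyz : Commute y z) (hyr : IsConj y r) :
    ∃ z' : Subgroup.centralizer {r}, IsConj z z' ∧ IsConj (y * z) (r * z') := by
  obtain ⟨x, rfl⟩ := isConj_iff.1 hyr
  have hmem : x * z * x⁻¹ ∈ Subgroup.centralizer {x * y * x⁻¹} := by
    rw [Subgroup.mem_centralizer_singleton_iff]
    simpa [MulAut.conj_apply] using (hyz.map (MulAut.conj x).toMonoidHom).eq.symm
  exact ⟨⟨_, hmem⟩, isConj_iff.2 ⟨x, rfl⟩, isConj_iff.2 ⟨x, by group⟩⟩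

variable [Finite G]

lemma card_conjClasses_mul_centralizer_le (σ : Set ℕ) (r : G) :
    Nat.card {c : ConjClasses G //
        ∃ z : Subgroup.centralizer {r}, IsPiElement σ z ∧ ConjClasses.mk (r * z) = c} ≤
      kpi σ (Subgroup.centralizer {r}) := by
  choose z hz hzc using fun c : {c : ConjClasses G //
    ∃ z : Subgroup.centralizer {r}, IsPiElement σ z ∧ ConjClasses.mk (r * z) = c} => c.2
  refine Nat.card_le_card_of_injective (fun c => PiClasses.mk (hz c)) fun c₁ c₂ h => ?_
  have hconj : IsConj (z c₁) (z c₂) := ConjClasses.mk_eq_mk_iff_isConj.1 (congrArg Subtype.val h)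
  exact Subtype.ext ((hzc c₁).symm.trans
    ((ConjClasses.mk_eq_mk_iff_isConj.2 hconj.mul_left_of_mem_centralizer).trans (hzc c₂)))

lemma kpi_le_kpi_mul (π μ : Set ℕ) {B : ℕ}
    (hB : ∀ r : G, kpi (π \ μ) (Subgroup.centralizer {r}) ≤ B) : kpi π G ≤ kpi μ G * B := by
  have hsplit (c : PiClasses π G) : ∃ y z : G, Commute y z ∧ ConjClasses.mk (y * z) = c.1 ∧
      IsPiElement μ y ∧ IsPiElement (π \ μ) z := by
    obtain ⟨g, hg, hgc⟩ := c.exists_rep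
    obtain ⟨y, z, hyz, rfl, hy, hz⟩ := hg.exists_commute_mul_eq μ (isOfFinOrder_of_finite g)
    exact ⟨y, z, hyz, hgc, hy, hz⟩
  choose y z hyz hc hy hz using hsplit
  refine Nat.card_le_card_mul_of_card_fiber_le (fun c => PiClasses.mk (hy c)) fun d => ?_
  obtain ⟨r, hr⟩ := d.1.exists_rep
  refine le_trans ?_ ((card_conjClasses_mul_centralizer_le (π \ μ) r).trans (hB r))
  refine Nat.card_le_card_of_injective (fun c => ⟨c.1.1, ?_⟩)
    fun c₁ c₂ h => Subtype.ext (Subtype.ext (Subtype.mk.inj h))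
  have hyr : IsConj (y c.1) r :=
    ConjClasses.mk_eq_mk_iff_isConj.1 ((congrArg Subtype.val c.2).trans hr.symm)
  obtain ⟨z', hzz', hc'⟩ := exists_mul_mem_centralizer (hyz c.1) hyr
  refine ⟨z', ?_, (ConjClasses.mk_eq_mk_iff_isConj.2 hc').symm.trans (hc c.1)⟩
  simpa [IsPiElement, Subgroup.orderOf_coe] using hzz'.isPiElement_iff.1 (hz c.1)

end ConjClasses

section Bound

variable {G : Type*} [Group G] [Finite G]

lemma Subgroup.piPart_card_le (σ : Set ℕ) (H : Subgroup G) :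
    piPart σ (Nat.card H) ≤ piPart σ (Nat.card G) :=
  Nat.le_of_dvd (piPart_pos _ _) (piPart_dvd_piPart H.card_subgroup_dvd_card Nat.card_pos.ne')

lemma Sylow.exists_conj_mem {p : ℕ} [Fact p.Prime] (P : Sylow p G) {g : G}
    (hg : IsPiElement {p} g) : ∃ x : G, x * g * x⁻¹ ∈ P := by
  have hord := Nat.eq_prime_pow_of_unique_prime_dvd (p := p) (orderOf_pos g).ne'
    fun hq hqg => hg _ hq hqg
  obtain ⟨Q, hQ⟩ := (IsPGroup.of_card ((Nat.card_zpowers g).trans hord)).exists_le_sylow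
  obtain ⟨x, rfl⟩ := MulAction.exists_smul_eq G Q P
  refine ⟨x, ?_⟩
  have := Subgroup.smul_mem_pointwise_smul g (MulAut.conj x) (Q : Subgroup G)
    (hQ (Subgroup.mem_zpowers g))
  rwa [← Sylow.coe_subgroup_smul] at this

lemma kpi_singleton_le_piPart {p : ℕ} (hp : p.Prime) :
    kpi {p} G ≤ piPart {p} (Nat.card G) := by
  have := Fact.mk hp
  obtain ⟨P⟩ : Nonempty (Sylow p G) := inferInstance
  have hmeet (c : PiClasses {p} G) : ∃ h : P, ConjClasses.mk (h : G) = c.1 := by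
    obtain ⟨g, hg, hgc⟩ := c.exists_rep
    obtain ⟨x, hx⟩ := P.exists_conj_mem hg
    exact ⟨⟨_, hx⟩, (ConjClasses.mk_eq_mk_iff_isConj.2 (isConj_iff.2 ⟨x, rfl⟩)).symm.trans hgc⟩
  choose h hh using hmeet
  calc kpi {p} G ≤ Nat.card P := Nat.card_le_card_of_injective h fun c₁ c₂ he =>
        Subtype.ext ((hh c₁).symm.trans (he ▸ hh c₂))
    _ ≤ piPart {p} (Nat.card G) := Nat.le_of_dvd (piPart_pos _ _)
      (dvd_piPart Nat.card_pos.ne' (Subgroup.card_subgroup_dvd_card _) fun q hq hqP =>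
        (Nat.prime_dvd_prime_iff_eq hq hp).1 (hq.dvd_of_dvd_pow (P.card_eq_multiplicity ▸ hqP)))

lemma kpi_le_one {σ : Set ℕ} (hσ : ∀ q ∈ σ, q.Prime → ¬q ∣ Nat.card G) : kpi σ G ≤ 1 := by
  refine Finite.card_le_one_iff_subsingleton.2 ⟨fun c₁ c₂ => ?_⟩
  have hone (c : PiClasses σ G) : c.1 = ConjClasses.mk 1 := by
    obtain ⟨g, hg, hgc⟩ := c.exists_rep
    rw [← hgc, orderOf_eq_one_iff.1 (Nat.eq_one_iff_not_exists_prime_dvd.2 fun q hq hqg =>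
      hσ q (hg q hq hqg) hq (hqg.trans (orderOf_dvd_natCard g)))]
  exact Subtype.ext ((hone c₁).trans (hone c₂).symm)

universe u

lemma kpi_le_piPart_of_forall_mem (s : Finset ℕ) :
    ∀ {G : Type u} [Group G] [Finite G] (σ : Set ℕ),
      (∀ q ∈ σ, q.Prime → q ∣ Nat.card G → q ∈ s) → kpi σ G ≤ piPart σ (Nat.card G) := by
  induction s using Finset.induction_on with
  | empty =>
    intro G _ _ σ hσ
    exact (kpi_le_one fun q hq hqp hqG => by simpa using hσ q hq hqp hqG).trans (piPart_pos _ _)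
  | insert p s hps ih =>
    intro G _ _ σ hσ
    by_cases hp : p ∈ σ ∧ p.Prime
    · have hB (r : G) : kpi (σ \ {p}) (Subgroup.centralizer {r}) ≤ piPart (σ \ {p}) (Nat.card G) :=
        (ih _ fun q hq hqp hqC => (Finset.mem_insert.1 (hσ q hq.1 hqp
          (hqC.trans (Subgroup.card_subgroup_dvd_card _)))).resolve_left hq.2).trans
          ((Subgroup.centralizer {r}).piPart_card_le _)
      calc kpi σ G ≤ kpi {p} G * piPart (σ \ {p}) (Nat.card G) := kpi_le_kpi_mul σ {p} hB
        _ ≤ piPart (σ ∩ {p}) (Nat.card G) * piPart (σ \ {p}) (Nat.card G) := by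
          rw [Set.inter_eq_right.2 (Set.singleton_subset_iff.2 hp.1)]
          gcongr
          exact kpi_singleton_le_piPart hp.2
        _ = piPart σ (Nat.card G) := piPart_inter_mul_piPart_diff σ {p}
    · exact ih σ fun q hq hqp hqG => (Finset.mem_insert.1 (hσ q hq hqp hqG)).resolve_left
        (by rintro rfl; exact hp ⟨hq, hqp⟩)

lemma kpi_le_piPart {G : Type u} [Group G] [Finite G] (σ : Set ℕ) :
    kpi σ G ≤ piPart σ (Nat.card G) :=
  kpi_le_piPart_of_forall_mem _ σ fun _ _ hqp hqG =>
    Nat.mem_primeFactors.2 ⟨hqp, hqG, Nat.card_pos.ne'⟩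

end Bound

theorem stmt_6_general {G : Type*} [Group G] [Finite G] (π μ : Set ℕ)
    (hμπ : μ ⊆ π) :
    (kpi π G : ℚ) / piPart π (Nat.card G) ≤ (kpi μ G : ℚ) / piPart μ (Nat.card G) ∧
      (kpi μ G : ℚ) / piPart μ (Nat.card G) ≤ 1 := by
  have hpos (σ : Set ℕ) : (0 : ℚ) < piPart σ (Nat.card G) := by
    exact_mod_cast piPart_pos σ _
  have hsplit : kpi π G ≤ kpi μ G * piPart (π \ μ) (Nat.card G) :=
    kpi_le_kpi_mul π μ fun r => (kpi_le_piPart _).trans (Subgroup.piPart_card_le _ _)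
  refine ⟨?_, (div_le_one (hpos μ)).2 (by exact_mod_cast kpi_le_piPart μ)⟩
  rw [div_le_div_iff₀ (hpos π) (hpos μ), ← piPart_inter_mul_piPart_diff π μ,
    Set.inter_eq_right.2 hμπ]
  push_cast
  calc (kpi π G : ℚ) * piPart μ (Nat.card G)
      ≤ kpi μ G * piPart (π \ μ) (Nat.card G) * piPart μ (Nat.card G) := by
        gcongr; exact_mod_cast hsplit
    _ = kpi μ G * (piPart μ (Nat.card G) * piPart (π \ μ) (Nat.card G)) := by ring

theorem stmt_6 {G : Type*} [Group G] [Finite G] (π μ : Set ℕ)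
    (hπ : ∀ q ∈ π, q.Prime) (hμne : μ.Nonempty) (hμπ : μ ⊆ π) :
    (kpi π G : ℚ) / piPart π (Nat.card G) ≤ (kpi μ G : ℚ) / piPart μ (Nat.card G) ∧
      (kpi μ G : ℚ) / piPart μ (Nat.card G) ≤ 1 :=
  stmt_6_general π μ hμπ
end

section
/- Let G be a finite non-abelian p-group. Then the commuting probability d(G) = k(G)/|G| satisfies d(G) < (p+1)/p². -/
/-!
By the class equation, `|G| = |Z(G)| + Σ |C|` over the noncentral classes `C`, and in a
`p`-group each such class has size at least `p`; hence `p k(G) ≤ |G| + (p - 1) |Z(G)|`.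
Since `G / Z(G)` is not cyclic, `[G : Z(G)] ≥ p²`, so `|Z(G)| ≤ |G| / p²`, which gives
`k(G) ≤ (p² + p - 1) |G| / p³ < (p + 1) |G| / p²`.
-/

open Subgroup ConjClasses

section

variable {G : Type*} [Group G]

theorem ConjClasses.card_eq_card_center_add_card_noncenter [Finite G] :
    Nat.card (ConjClasses G) = Nat.card (center G) + Nat.card (noncenter G) := by
  classical
  rw [← Nat.card_congr (Equiv.sumCompl (· ∈ noncenter G)), Nat.card_sum, add_comm]
  exact congrArg (· + _) (Nat.card_congr ((mk_bijOn G).equiv _)).symm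

theorem Group.card_center_add_mul_card_noncenter_le [Finite G] {q : ℕ}
    (hq : ∀ c ∈ noncenter G, q ≤ Nat.card c.carrier) :
    Nat.card (center G) + q * Nat.card (noncenter G) ≤ Nat.card G := by
  classical
  have : Fintype (noncenter G) := Fintype.ofFinite _
  rw [← Group.nat_card_center_add_sum_card_noncenter_eq_card G,
    finsum_mem_eq_toFinset_sum, Nat.card_eq_card_toFinset, mul_comm, ← smul_eq_mul]
  gcongr
  exact Finset.card_nsmul_le_sum _ _ _ fun c hc => hq c (Set.mem_toFinset.mp hc)

theorem IsPGroup.prime_le_card_carrier_of_mem_noncenter [Finite G] {p : ℕ} [Fact p.Prime]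
    (hG : IsPGroup p G) {c : ConjClasses G} (hc : c ∈ noncenter G) :
    p ≤ Nat.card c.carrier := by
  obtain ⟨g, rfl⟩ := c.exists_rep
  obtain ⟨n, hn⟩ := (hG.of_equiv ConjAct.toConjAct).card_orbit g
  rw [ConjAct.orbit_eq_carrier_conjClasses] at hn
  rw [hn]
  rcases n with _ | n
  · rw [mem_noncenter, ← Set.one_lt_ncard_iff_nontrivial, ← Nat.card_coe_set_eq, hn] at hc
    exact absurd hc (lt_irrefl _)
  · exact Nat.le_self_pow n.succ_ne_zero p

theorem IsPGroup.sq_le_index_center [Finite G] {p : ℕ} [Fact p.Prime] (hG : IsPGroup p G)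
    (hnc : ¬ IsMulCommutative G) : p ^ 2 ≤ (center G).index := by
  obtain ⟨n, hn⟩ := hG.index (center G)
  rw [hn]
  refine Nat.pow_le_pow_right (Fact.out : p.Prime).pos (not_lt.mp fun hn2 => hnc ?_)
  have : IsCyclic (G ⧸ center G) := by
    refine isCyclic_of_card_dvd_prime (p := p) ?_
    rw [← index_eq_card, hn]
    interval_cases n <;> simp
  exact isMulCommutative_of_isCyclic_quotient_center_self G

end

theorem stmt_7 {G : Type*} [Group G] [Finite G] (p : ℕ) [Fact p.Prime]
    (hG : IsPGroup p G) (hna : ∃ a b : G, a * b ≠ b * a) :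
    (Nat.card (ConjClasses G) : ℚ) / Nat.card G < (p + 1) / p ^ 2 := by
  obtain ⟨a, b, hab⟩ := hna
  have hindex := hG.sq_le_index_center fun h => hab (h.is_comm.comm a b)
  have hcard := (center G).card_mul_index
  have hclass := Group.card_center_add_mul_card_noncenter_le
    fun _ => hG.prime_le_card_carrier_of_mem_noncenter
  have hk := ConjClasses.card_eq_card_center_add_card_noncenter (G := G)
  have hZ : 0 < Nat.card (center G) := Nat.card_pos
  have hp := (Fact.out : p.Prime).two_le
  have key : p ^ 2 * Nat.card (ConjClasses G) < (p + 1) * Nat.card G := by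
    nlinarith
  rw [div_lt_div_iff₀ (by exact_mod_cast Nat.card_pos) (by positivity), mul_comm]
  exact_mod_cast key
end

section
/- Let G be a finite group that does not have a normal Sylow p-subgroup for some prime p dividing |G|. Then the commuting probability d(G) = k(G)/|G| is at most 1/p. -/
/-!
Induction on `|G|`. The commuting probability can only grow on passing to a subgroup `H`
(count commuting pairs in `G × H` in two ways, using `|C_G(a)| ≤ |G : H| |C_H(a)|`) or to a
quotient. If `Z(G) ≠ 1`, pass to `G / Z(G)`: a normal Sylow subgroup `PZ/Z` there would make
`PZ ≤ N_G(P)` normal, and the Frattini argument makes `P` normal. If `Z(G) = 1` and some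
`g ≠ 1` has fewer than `p` conjugates, the normal core `K` of `C_G(g)` is proper and its index
divides `|G : C_G(g)|!`, so it is prime to `p`; then `P ≤ K`, and a normal Sylow subgroup of
`K` would again be normal in `G` by Frattini. Otherwise every class but `{1}` has at least `p`
elements, so `|G| > (k(G) - 1) p`, and `p ∣ |G|` (a trivial Sylow subgroup would be normal)
gives `k(G) p ≤ |G|`.
-/

open Subgroup

namespace Subgroup

variable {G : Type*} [Group G]

theorem card_lt_card_of_ne_top [Finite G] {K : Subgroup G} (hK : K ≠ ⊤) :
    Nat.card K < Nat.card G := by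
  rw [← K.card_mul_index]
  exact lt_mul_of_one_lt_right Nat.card_pos (one_lt_index_of_ne_top hK)

theorem card_quotient_lt_card [Finite G] {N : Subgroup G} (hN : N ≠ ⊥) :
    Nat.card (G ⧸ N) < Nat.card G := by
  rw [card_eq_card_quotient_mul_card_subgroup N]
  exact lt_mul_of_one_lt_right Nat.card_pos ((one_lt_card_iff_ne_bot N).mpr hN)

theorem card_subgroupOf_comm (H K : Subgroup G) :
    Nat.card (H.subgroupOf K) = Nat.card (K.subgroupOf H) := by
  rw [← inf_subgroupOf_right, ← inf_subgroupOf_right K, inf_comm,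
    Nat.card_congr (subgroupOfEquivOfLe inf_le_right).toEquiv,
    Nat.card_congr (subgroupOfEquivOfLe inf_le_left).toEquiv]

theorem card_le_index_mul_card_subgroupOf (H K : Subgroup G) [H.FiniteIndex] :
    Nat.card K ≤ H.index * Nat.card (K.subgroupOf H) := by
  rw [← (H.subgroupOf K).index_mul_card, card_subgroupOf_comm]
  gcongr
  exact relIndex_le_of_le_right le_top (by simpa using FiniteIndex.index_ne_zero) |>.trans_eq
    H.relIndex_top_right

theorem index_normalCore_dvd_factorial (H : Subgroup G) [H.FiniteIndex] :
    H.normalCore.index ∣ H.index.factorial := by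
  rw [normalCore_eq_ker, index_ker, index_eq_card, ← Nat.card_perm]
  exact card_subgroup_dvd_card (MulAction.toPermHom G (G ⧸ H)).range

theorem not_dvd_index_normalCore {p : ℕ} (hp : p.Prime) {H : Subgroup G} [H.FiniteIndex]
    (hH : H.index < p) :
    ¬p ∣ H.normalCore.index :=
  fun hdvd ↦ hH.not_ge <| hp.dvd_factorial.mp (hdvd.trans H.index_normalCore_dvd_factorial)

end Subgroup

theorem ConjClasses.ncard_carrier_mk {G : Type*} [Group G] (g : G) :
    (ConjClasses.mk g).carrier.ncard = (centralizer {g}).index := by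
  rw [← ConjAct.orbit_eq_carrier_conjClasses, ← MulAction.index_stabilizer,
    centralizer_eq_comap_stabilizer]
  exact (index_comap_of_surjective _ (MulEquiv.surjective _)).symm

namespace Sylow

variable {G : Type*} [Group G] {p : ℕ} [Fact p.Prime]

theorem le_of_not_dvd_index (P : Sylow p G) {K : Subgroup G} [K.Normal] (hK : ¬p ∣ K.index) :
    (P : Subgroup G) ≤ K := by
  rcases (P.2.map (QuotientGroup.mk' K)).card_eq_or_dvd with h1 | hdvd
  · rwa [card_eq_one, Subgroup.map_eq_bot_iff, QuotientGroup.ker_mk'] at h1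
  · rw [index_eq_card] at hK
    exact absurd (hdvd.trans (card_subgroup_dvd_card _)) hK

theorem dvd_card_of_forall_not_normal (h : ∀ P : Sylow p G, ¬(P : Subgroup G).Normal) :
    p ∣ Nat.card G := by
  obtain ⟨P⟩ : Nonempty (Sylow p G) := inferInstance
  rcases P.2.card_eq_or_dvd with h1 | hdvd
  · rw [card_eq_one] at h1
    exact absurd (h1 ▸ normal_bot) (h P)
  · exact hdvd.trans (card_subgroup_dvd_card _)

variable [Finite G]

theorem normal_of_le_normal_of_le_normalizer (P : Sylow p G) {K : Subgroup G} [K.Normal]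
    (hPK : (P : Subgroup G) ≤ K) (hK : K ≤ normalizer (P : Subgroup G)) :
    (P : Subgroup G).Normal := by
  have := P.normalizer_sup_eq_top' hPK
  rw [← normalizer_eq_top_iff]
  rwa [← P.coe_coe, sup_of_le_left hK] at this

theorem normal_of_subtype_normal (P : Sylow p G) {K : Subgroup G} [K.Normal]
    (hPK : (P : Subgroup G) ≤ K) (h : (P.subtype hPK : Subgroup K).Normal) :
    (P : Subgroup G).Normal := by
  rw [coe_subtype] at h
  exact P.normal_of_le_normal_of_le_normalizer hPK (le_normalizer_of_normal_subgroupOf hPK)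

theorem normal_of_map_normal {G' : Type*} [Group G'] {f : G →* G'} (hf : f.ker ≤ center G)
    (P : Sylow p G) (h : ((P : Subgroup G).map f).Normal) : (P : Subgroup G).Normal := by
  have hK := h.comap f
  rw [comap_map_eq] at hK
  exact P.normal_of_le_normal_of_le_normalizer le_sup_left
    (sup_le le_normalizer (hf.trans (center_le_normalizer _)))

theorem forall_not_normal_subgroup {K : Subgroup G} [K.Normal] (hK : ¬p ∣ K.index)
    (h : ∀ P : Sylow p G, ¬(P : Subgroup G).Normal) (Q : Sylow p K) :
    ¬(Q : Subgroup K).Normal := by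
  intro hQ
  obtain ⟨P⟩ : Nonempty (Sylow p G) := inferInstance
  have := unique_of_normal Q hQ
  have hPK := P.le_of_not_dvd_index hK
  rw [← Subsingleton.elim (P.subtype hPK) Q] at hQ
  exact h P (P.normal_of_subtype_normal hPK hQ)

theorem forall_not_normal_quotient {N : Subgroup G} [N.Normal] (hN : N ≤ center G)
    (h : ∀ P : Sylow p G, ¬(P : Subgroup G).Normal) (Q : Sylow p (G ⧸ N)) :
    ¬(Q : Subgroup (G ⧸ N)).Normal := by
  intro hQ
  obtain ⟨P⟩ : Nonempty (Sylow p G) := inferInstance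
  have := unique_of_normal Q hQ
  rw [← Subsingleton.elim (P.mapSurjective (QuotientGroup.mk'_surjective N)) Q,
    coe_mapSurjective] at hQ
  exact h P (P.normal_of_map_normal (by rwa [QuotientGroup.ker_mk']) hQ)

end Sylow

theorem commProb_le_commProb_of_card_commute_le {M M' : Type*} [Mul M] [Mul M'] {m : ℕ}
    (hcard : Nat.card M = m * Nat.card M')
    (hcomm : Nat.card {q : M × M // Commute q.1 q.2} ≤
      m ^ 2 * Nat.card {q : M' × M' // Commute q.1 q.2}) :
    commProb M ≤ commProb M' := by
  rw [commProb_def, commProb_def, hcard, Nat.cast_mul, mul_pow, ← div_div]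
  gcongr
  exact div_le_of_le_mul₀ (by positivity) (by positivity) (by rw [mul_comm]; exact_mod_cast hcomm)

section Gallagher

variable {G : Type*} [Group G] [Finite G]

theorem card_commute_le_index_mul (H : Subgroup G) (a : G) :
    Nat.card {g : G // Commute a g} ≤ H.index * Nat.card {h : H // Commute a h} := by
  have e₁ : {g : G // Commute a g} ≃ centralizer {a} :=
    Equiv.subtypeEquivRight fun g ↦ by rw [mem_centralizer_singleton_iff]; exact eq_comm
  have e₂ : {h : H // Commute a h} ≃ (centralizer {a}).subgroupOf H :=
    Equiv.subtypeEquivRight fun h ↦ by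
      rw [mem_subgroupOf, mem_centralizer_singleton_iff]
      exact eq_comm
  rw [Nat.card_congr e₁, Nat.card_congr e₂]
  exact card_le_index_mul_card_subgroupOf H _

theorem card_commute_prod_le_index_mul {α : Type*} [Finite α] (f : α → G) (H : Subgroup G) :
    Nat.card {q : α × G // Commute (f q.1) q.2} ≤
      H.index * Nat.card {q : α × H // Commute (f q.1) q.2} := by
  have := Fintype.ofFinite α
  rw [Nat.card_congr (Equiv.subtypeProdEquivSigmaSubtype fun a (g : G) ↦ Commute (f a) g),
    Nat.card_congr (Equiv.subtypeProdEquivSigmaSubtype fun a (h : H) ↦ Commute (f a) h),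
    Nat.card_sigma, Nat.card_sigma, Finset.mul_sum]
  exact Finset.sum_le_sum fun a _ ↦ card_commute_le_index_mul H (f a)

theorem commProb_le_commProb_subgroup (H : Subgroup G) : commProb G ≤ commProb H := by
  refine commProb_le_commProb_of_card_commute_le H.index_mul_card.symm ?_
  have swap : {q : G × H // Commute q.1 (q.2 : G)} ≃ {q : H × G // Commute (q.1 : G) q.2} :=
    (Equiv.prodComm G H).subtypeEquiv fun _ ↦ Commute.symm_iff
  have coe : {q : H × H // Commute (q.1 : G) q.2} ≃ {q : H × H // Commute q.1 q.2} :=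
    Equiv.subtypeEquivRight fun _ ↦ Submonoid.commute_coe_coe
  calc Nat.card {q : G × G // Commute q.1 q.2}
      ≤ H.index * Nat.card {q : G × H // Commute q.1 (q.2 : G)} :=
        card_commute_prod_le_index_mul id H
    _ = H.index * Nat.card {q : H × G // Commute (q.1 : G) q.2} := by rw [Nat.card_congr swap]
    _ ≤ H.index * (H.index * Nat.card {q : H × H // Commute (q.1 : G) q.2}) := by
        gcongr
        exact card_commute_prod_le_index_mul (Subtype.val : H → G) H
    _ = H.index ^ 2 * Nat.card {q : H × H // Commute q.1 q.2} := by
        rw [Nat.card_congr coe]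
        ring

end Gallagher

theorem commProb_le_commProb_quotient {G : Type*} [Group G] [Finite G] (N : Subgroup G)
    [N.Normal] : commProb G ≤ commProb (G ⧸ N) := by
  refine commProb_le_commProb_of_card_commute_le
    ((card_eq_card_quotient_mul_card_subgroup N).trans (mul_comm _ _)) ?_
  -- `(e x).1 = x N` holds by `rfl`, so `x` is determined by `x N` and `(e x).2`.
  let e : G ≃ (G ⧸ N) × N := groupEquivQuotientProdSubgroup
  let f (q : {q : G × G // Commute q.1 q.2}) :
      {q : (G ⧸ N) × (G ⧸ N) // Commute q.1 q.2} × (N × N) :=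
    (⟨(q.1.1, q.1.2), q.2.map (QuotientGroup.mk' N)⟩, ((e q.1.1).2, (e q.1.2).2))
  have hf : Function.Injective f := by
    rintro ⟨⟨x₁, x₂⟩, _⟩ ⟨⟨y₁, y₂⟩, _⟩ hxy
    simp only [f, Prod.mk.injEq, Subtype.ext_iff] at hxy
    obtain ⟨⟨h₁, h₂⟩, h₃, h₄⟩ := hxy
    have hx₁ : e x₁ = e y₁ := Prod.ext h₁ (Subtype.ext h₃)
    have hx₂ : e x₂ = e y₂ := Prod.ext h₂ (Subtype.ext h₄)
    simp [e.injective hx₁, e.injective hx₂]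
  simpa [Nat.card_prod, sq, mul_comm] using Nat.card_le_card_of_injective f hf

theorem card_conjClasses_mul_le_card {G : Type*} [Group G] [Finite G] {p : ℕ}
    (hp : p ∣ Nat.card G) (h : ∀ g : G, g ≠ 1 → p ≤ (centralizer {g}).index) :
    Nat.card (ConjClasses G) * p ≤ Nat.card G := by
  classical
  have := Fintype.ofFinite G
  have hsum : ∑ c : ConjClasses G, c.carrier.ncard = Nat.card G := by
    rw [← Group.sum_card_conj_classes_eq_card, finsum_eq_sum_of_fintype]
  have hlarge : ∀ c ∈ Finset.univ.erase (ConjClasses.mk (1 : G)), p ≤ c.carrier.ncard := by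
    intro c hc
    obtain ⟨g, rfl⟩ := ConjClasses.mk_surjective c
    rw [ConjClasses.ncard_carrier_mk]
    exact h g (by rintro rfl; exact Finset.ne_of_mem_erase hc rfl)
  have hone : (ConjClasses.mk (1 : G)).carrier.ncard = 1 := by
    simp [ConjClasses.ncard_carrier_mk]
  have hrest := Finset.card_nsmul_le_sum _ _ _ hlarge
  rw [← Finset.add_sum_erase _ _ (Finset.mem_univ (ConjClasses.mk 1)), hone] at hsum
  rw [Finset.card_erase_of_mem (Finset.mem_univ _), Finset.card_univ, smul_eq_mul] at hrest
  obtain ⟨k, hk⟩ := Nat.exists_eq_succ_of_ne_zero (Fintype.card_pos (α := ConjClasses G)).ne'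
  rw [Nat.card_eq_fintype_card (α := ConjClasses G)]
  refine Nat.le_of_lt_add_of_dvd ?_ (dvd_mul_left p _) hp
  rw [hk, Nat.succ_sub_one] at hrest
  rw [hk, Nat.succ_mul]
  omega

theorem commProb_le_of_le_index_centralizer {G : Type*} [Group G] [Finite G] {p : ℕ}
    (hp : p ∣ Nat.card G) (h : ∀ g : G, g ≠ 1 → p ≤ (centralizer {g}).index) :
    commProb G ≤ 1 / p := by
  rw [commProb_def', div_le_div_iff₀ (Nat.cast_pos.2 Nat.card_pos)
    (Nat.cast_pos.2 (Nat.pos_of_dvd_of_pos hp Nat.card_pos)), one_mul]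
  exact_mod_cast card_conjClasses_mul_le_card hp h

theorem commProb_le_of_forall_sylow_not_normal {p : ℕ} [Fact p.Prime] (G : Type*) [Group G]
    [Finite G] (h : ∀ P : Sylow p G, ¬(P : Subgroup G).Normal) : commProb G ≤ 1 / p := by
  induction hn : Nat.card G using Nat.strong_induction_on generalizing G with
  | _ n ih =>
  subst hn
  by_cases hZ : center G = ⊥
  · by_cases hsmall : ∃ g : G, g ≠ 1 ∧ (centralizer {g}).index < p
    · obtain ⟨g, hg, hlt⟩ := hsmall
      have hK : ¬p ∣ (centralizer {g}).normalCore.index :=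
        not_dvd_index_normalCore Fact.out hlt
      have hKtop : (centralizer {g}).normalCore ≠ ⊤ := by
        refine ne_top_of_le_ne_top ?_ (normalCore_le _)
        rw [Ne, centralizer_eq_top_iff_subset, Set.singleton_subset_iff, hZ]
        exact hg
      exact (commProb_le_commProb_subgroup _).trans
        (ih _ (card_lt_card_of_ne_top hKtop) _ (Sylow.forall_not_normal_subgroup hK h) rfl)
    · push Not at hsmall
      exact commProb_le_of_le_index_centralizer (Sylow.dvd_card_of_forall_not_normal h) hsmall
  · exact (commProb_le_commProb_quotient _).trans
      (ih _ (card_quotient_lt_card hZ) _ (Sylow.forall_not_normal_quotient le_rfl h) rfl)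

theorem stmt_8_general {G : Type*} [Group G] [Finite G] (p : ℕ) [Fact p.Prime]
    (h : ∀ P : Sylow p G, ¬ (P : Subgroup G).Normal) :
    (Nat.card (ConjClasses G) : ℚ) / Nat.card G ≤ 1 / p := by
  rw [← commProb_def']
  exact commProb_le_of_forall_sylow_not_normal G h

theorem stmt_8 {G : Type*} [Group G] [Finite G] (p : ℕ) [Fact p.Prime]
    (hdvd : p ∣ Nat.card G) (h : ∀ P : Sylow p G, ¬ (P : Subgroup G).Normal) :
    (Nat.card (ConjClasses G) : ℚ) / Nat.card G ≤ 1 / p :=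
  stmt_8_general p h
end

section
/- Let G be a finite group with abelian Sylow p-subgroup P, and suppose G has no normal p-complement and that every nontrivial x ∈ P satisfies |x^G ∩ P| ≥ 2 (e.g., when Z*_p(G) = 1). Then k_p(G) ≤ (|P|+1)/2, and hence d_p(G) = k_p(G)/|P| ≤ (p+1)/(2p). -/
open Finset

theorem Finset.two_mul_card_image_le_card_add_one {ι M : Type*} [DecidableEq M]
    (s : Finset ι) (f : ι → M) {m₀ : M} (h₀ : m₀ ∈ s.image f)
    (hfib : ∀ m ∈ s.image f, m ≠ m₀ → 2 ≤ #{i ∈ s | f i = m}) :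
    2 * #(s.image f) ≤ #s + 1 := by
  have hfib₀ : 1 ≤ #{i ∈ s | f i = m₀} := by
    obtain ⟨i, hi, rfl⟩ := mem_image.1 h₀
    exact card_pos.2 ⟨i, mem_filter.2 ⟨hi, rfl⟩⟩
  have hrest : 2 * #((s.image f).erase m₀) ≤
      ∑ m ∈ (s.image f).erase m₀, #{i ∈ s | f i = m} := by
    rw [mul_comm, ← smul_eq_mul, ← sum_const]
    exact sum_le_sum fun m hm => hfib m (mem_of_mem_erase hm) (ne_of_mem_erase hm)
  rw [card_eq_sum_card_image f s, ← add_sum_erase _ _ h₀, ← card_erase_add_one h₀]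
  omega

theorem two_mul_card_range_le_card_add_one {α β : Type*} [Finite α] (f : α → β) (a₀ : α)
    (hfib : ∀ a, f a ≠ f a₀ → 2 ≤ Nat.card (f ⁻¹' {f a})) :
    2 * Nat.card (Set.range f) ≤ Nat.card α + 1 := by
  classical
  have := Fintype.ofFinite α
  rw [Nat.card_eq_card_toFinset, Set.toFinset_range, Nat.card_eq_fintype_card, ← card_univ]
  refine univ.two_mul_card_image_le_card_add_one f (mem_image_of_mem f (mem_univ a₀)) ?_
  rintro _ hm hne
  obtain ⟨a, -, rfl⟩ := mem_image.1 hm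
  simpa [Nat.card_eq_card_toFinset] using hfib a hne

theorem div_le_of_two_mul_le_add_one {k n p : ℕ} (hp : 0 < p) (hpn : p ≤ n)
    (hk : 2 * k ≤ n + 1) : (k : ℚ) / n ≤ (p + 1) / (2 * p) := by
  have hp' : (0 : ℚ) < p := by exact_mod_cast hp
  have hpn' : (p : ℚ) ≤ n := by exact_mod_cast hpn
  have hk' : 2 * (k : ℚ) ≤ n + 1 := by exact_mod_cast hk
  rw [div_le_div_iff₀ (by linarith) (by positivity)]
  nlinarith

theorem Subgroup.card_preimage_conjClassesMk {G : Type*} [Group G] (H : Subgroup G) (x : H) :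
    Nat.card ((fun y : H => ConjClasses.mk (y : G)) ⁻¹' {ConjClasses.mk (x : G)}) =
      Nat.card ({y : G | IsConj (x : G) y} ∩ H : Set G) := by
  rw [Set.inter_comm]
  refine Nat.card_congr ((Equiv.subtypeEquivRight fun y => ?_).trans
    (Equiv.subtypeSubtypeEquivSubtypeInter (· ∈ H) (IsConj (x : G))))
  rw [Set.mem_preimage, Set.mem_singleton_iff, ConjClasses.mk_eq_mk_iff_isConj, isConj_comm]

namespace Sylow

variable {G : Type*} [Group G] [Finite G] {p : ℕ} [Fact p.Prime] (P : Sylow p G)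

theorem exists_mem_isConj_of_orderOf_eq_pow {g : G} {n : ℕ} (hg : orderOf g = p ^ n) :
    ∃ x ∈ P, IsConj g x := by
  obtain ⟨Q, hQ⟩ := (IsPGroup.of_card (by rw [Nat.card_zpowers, hg]) :
    IsPGroup p (Subgroup.zpowers g)).exists_le_sylow
  obtain ⟨h, rfl⟩ := MulAction.exists_smul_eq G Q P
  refine ⟨h * g * h⁻¹, ?_, isConj_iff.2 ⟨h, rfl⟩⟩
  show h * g * h⁻¹ ∈ ((h • Q : Sylow p G) : Set G)
  rw [Sylow.coe_smul]
  exact ⟨g, hQ (Subgroup.mem_zpowers g), rfl⟩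

theorem kp_eq_card_range :
    kp p G = Nat.card (Set.range fun x : P => ConjClasses.mk (x : G)) := by
  refine Nat.card_congr (Equiv.subtypeEquivRight fun c => ⟨fun hc => ?_, ?_⟩)
  · obtain ⟨g, rfl⟩ := ConjClasses.mk_surjective c
    obtain ⟨n, hn⟩ := hc g ConjClasses.mem_carrier_mk
    obtain ⟨x, hx, hgx⟩ := P.exists_mem_isConj_of_orderOf_eq_pow hn
    exact ⟨⟨x, hx⟩, ConjClasses.mk_eq_mk_iff_isConj.2 hgx.symm⟩
  · rintro ⟨x, rfl⟩ g hg
    obtain ⟨c, hc⟩ :=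
      ConjClasses.mk_eq_mk_iff_isConj.1 (ConjClasses.mem_carrier_iff_mk_eq.1 hg)
    rw [hc.orderOf_eq, Subgroup.orderOf_coe]
    exact IsPGroup.iff_orderOf.1 P.isPGroup' x

theorem prime_le_card (hdvd : p ∣ Nat.card G) : p ≤ Nat.card P :=
  Nat.le_of_dvd Nat.card_pos (P.dvd_card_of_dvd_card hdvd)

end Sylow

theorem stmt_10_general {G : Type*} [Group G] [Finite G] (p : ℕ) [Fact p.Prime]
    (P : Sylow p G)
    (hnc : ¬ ∃ N : Subgroup G, N.Normal ∧ ¬ p ∣ Nat.card N ∧ ∃ k : ℕ, N.index = p ^ k)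
    (hcl : ∀ x ∈ (P : Subgroup G), x ≠ 1 →
      2 ≤ Nat.card ({y : G | IsConj x y} ∩ (P : Subgroup G) : Set G)) :
    (kp p G : ℚ) ≤ (Nat.card ↥(P : Subgroup G) + 1) / 2 ∧
      (kp p G : ℚ) / Nat.card ↥(P : Subgroup G) ≤ (p + 1) / (2 * p) := by
  have hcount : 2 * kp p G ≤ Nat.card P + 1 := by
    rw [P.kp_eq_card_range]
    refine two_mul_card_range_le_card_add_one _ 1 fun x hx => ?_
    exact (hcl x x.2 fun h => hx (by rw [h]; rfl)).trans_eq
      ((P : Subgroup G).card_preimage_conjClassesMk x).symm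
  have hdvd : p ∣ Nat.card G := by
    by_contra h
    exact hnc ⟨⊤, inferInstance, by rwa [Subgroup.card_top], 0, Subgroup.index_top⟩
  refine ⟨?_, div_le_of_two_mul_le_add_one (Fact.out : p.Prime).pos (P.prime_le_card hdvd) hcount⟩
  rw [le_div_iff₀ two_pos]
  exact_mod_cast (mul_comm _ _).trans_le hcount

theorem stmt_10 {G : Type*} [Group G] [Finite G] (p : ℕ) [Fact p.Prime]
    (P : Sylow p G) (hab : IsMulCommutative ↥(P : Subgroup G))
    (hnc : ¬ ∃ N : Subgroup G, N.Normal ∧ ¬ p ∣ Nat.card N ∧ ∃ k : ℕ, N.index = p ^ k)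
    (hcl : ∀ x ∈ (P : Subgroup G), x ≠ 1 →
      2 ≤ Nat.card ({y : G | IsConj x y} ∩ (P : Subgroup G) : Set G)) :
    (kp p G : ℚ) ≤ (Nat.card ↥(P : Subgroup G) + 1) / 2 ∧
      (kp p G : ℚ) / Nat.card ↥(P : Subgroup G) ≤ (p + 1) / (2 * p) :=
  stmt_10_general p P hnc hcl
end

section
/- Let p be an odd prime and G a finite group with Sylow p-subgroup P. If d_p(G) = k_p(G)/|P| ≥ (p+1)/(2p), then P is abelian. -/
open Subgroup

theorem Sylow.exists_isConj_mem_of_orderOf_eq_prime_pow {G : Type*} [Group G] {p : ℕ}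
    [Fact p.Prime] [Finite (Sylow p G)] (P : Sylow p G) {g : G} {n : ℕ}
    (hg : orderOf g = p ^ n) : ∃ h ∈ (P : Subgroup G), IsConj g h := by
  have hpg : IsPGroup p (zpowers g) := IsPGroup.of_card (by rw [Nat.card_zpowers, hg])
  obtain ⟨R, hR⟩ := hpg.exists_le_sylow
  obtain ⟨x, rfl⟩ := MulAction.exists_smul_eq G R P
  refine ⟨x * g * x⁻¹, ?_, isConj_iff.mpr ⟨x, rfl⟩⟩
  rw [Sylow.coe_subgroup_smul]
  simpa using Subgroup.smul_mem_pointwise_smul g (MulAut.conj x) R (hR (mem_zpowers g))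

theorem kp_le_card_conjClasses {G : Type*} [Group G] [Finite G] {p : ℕ} [Fact p.Prime]
    (P : Sylow p G) : kp p G ≤ Nat.card (ConjClasses (P : Subgroup G)) := by
  refine (Nat.card_mono (Set.finite_range _) ?_).trans
    (Finite.card_range_le (ConjClasses.map (P : Subgroup G).subtype))
  rintro c hc
  obtain ⟨g, rfl⟩ := ConjClasses.mk_surjective c
  obtain ⟨n, hn⟩ := hc g ConjClasses.mem_carrier_mk
  obtain ⟨h, hP, hgh⟩ := P.exists_isConj_mem_of_orderOf_eq_prime_pow hn
  exact ⟨ConjClasses.mk ⟨h, hP⟩, ConjClasses.mk_eq_mk_iff_isConj.mpr hgh.symm⟩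

namespace IsPGroup

variable {p : ℕ} [Fact p.Prime] {H : Type*} [Group H] [Finite H]

theorem prime_le_card_carrier_of_mem_noncenter_s11 (hH : IsPGroup p H) {c : ConjClasses H}
    (hc : c ∈ ConjClasses.noncenter H) : p ≤ Nat.card c.carrier := by
  obtain ⟨g, rfl⟩ := ConjClasses.mk_surjective c
  obtain ⟨n, hn⟩ := (hH.of_equiv ConjAct.toConjAct).card_orbit g
  rw [ConjAct.orbit_eq_carrier_conjClasses] at hn
  have hn0 : n ≠ 0 := by
    rintro rfl
    rw [ConjClasses.mem_noncenter, ← Set.one_lt_ncard_iff_nontrivial, ← Nat.card_coe_set_eq,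
      hn] at hc
    simp at hc
  exact hn ▸ Nat.le_self_pow hn0 p

theorem card_conjClasses_mul_add_card_center_le (hH : IsPGroup p H) :
    p * Nat.card (ConjClasses H) + Nat.card (center H) ≤
      Nat.card H + p * Nat.card (center H) := by
  classical
  have : Fintype (ConjClasses H) := Fintype.ofFinite _
  set N := ConjClasses.noncenter H
  have hZ : Nat.card (center H) = (Nᶜ).toFinset.card := by
    rw [← Nat.card_eq_card_toFinset]
    exact Nat.card_congr ((ConjClasses.mk_bijOn H).equiv _)
  have hk : Nat.card (ConjClasses H) = N.toFinset.card + (Nᶜ).toFinset.card := by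
    rw [Set.toFinset_compl, Finset.card_add_card_compl, Nat.card_eq_fintype_card]
  have hclassEq := Group.nat_card_center_add_sum_card_noncenter_eq_card H
  rw [finsum_mem_eq_toFinset_sum] at hclassEq
  have hsum : N.toFinset.card • p ≤ ∑ c ∈ N.toFinset, Nat.card c.carrier :=
    Finset.card_nsmul_le_sum _ _ _ fun c hc ↦
      hH.prime_le_card_carrier_of_mem_noncenter_s11 (Set.mem_toFinset.mp hc)
  rw [smul_eq_mul] at hsum
  rw [hk, ← hZ]
  linarith

theorem card_center_mul_sq_le (hH : IsPGroup p H) (hnc : ¬IsMulCommutative H) :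
    p ^ 2 * Nat.card (center H) ≤ Nat.card H := by
  obtain ⟨m, hm⟩ := iff_card.mp (hH.to_quotient (center H))
  have hm : (center H).index = p ^ m := hm
  have hm2 : 2 ≤ m := by
    by_contra! hlt
    interval_cases m
    · exact hnc (center_eq_top_iff.mp (index_eq_one.mp hm))
    · have : IsCyclic (H ⧸ center H) := isCyclic_of_prime_card (hm.trans (pow_one p))
      exact hnc (isMulCommutative_of_isCyclic_quotient_center_self H)
  rw [← (center H).card_mul_index, mul_comm, hm]
  exact Nat.mul_le_mul_left _ (Nat.pow_le_pow_right (Fact.out : p.Prime).pos hm2)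

theorem commProb_le (hH : IsPGroup p H) (hnc : ¬IsMulCommutative H) :
    commProb H ≤ (p ^ 2 + p - 1) / p ^ 3 := by
  have hp : (1 : ℚ) ≤ p := by exact_mod_cast (Fact.out : p.Prime).one_le
  have hclass : (p : ℚ) * Nat.card (ConjClasses H) + Nat.card (center H) ≤
      Nat.card H + p * Nat.card (center H) := by
    exact_mod_cast hH.card_conjClasses_mul_add_card_center_le
  have hcenter : (p : ℚ) ^ 2 * Nat.card (center H) ≤ Nat.card H := by
    exact_mod_cast hH.card_center_mul_sq_le hnc
  rw [commProb_def', div_le_div_iff₀ (by simp [Nat.card_pos]) (by positivity)]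
  nlinarith [mul_le_mul_of_nonneg_left hclass (by positivity : (0 : ℚ) ≤ p ^ 2),
    mul_le_mul_of_nonneg_left hcenter (by linarith : (0 : ℚ) ≤ p - 1)]

end IsPGroup

theorem stmt_11_general {G : Type*} [Group G] [Finite G] (p : ℕ) [Fact p.Prime]
    (P : Sylow p G)
    (hd : ((p : ℚ) + 1) / (2 * p) ≤ (kp p G : ℚ) / Nat.card ↥(P : Subgroup G)) :
    IsMulCommutative ↥(P : Subgroup G) := by
  by_contra hnc
  have hp : (2 : ℚ) ≤ p := by exact_mod_cast (Fact.out : p.Prime).two_le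
  have hkp : (kp p G : ℚ) / Nat.card P ≤ commProb P := by
    rw [commProb_def']
    gcongr
    exact_mod_cast kp_le_card_conjClasses P
  have hgap : ((p : ℚ) ^ 2 + p - 1) / p ^ 3 < (p + 1) / (2 * p) := by
    rw [div_lt_div_iff₀ (by positivity) (by positivity)]
    have hfactor : 0 < (p : ℚ) * (p - 1) * (p ^ 2 - 2) :=
      mul_pos (mul_pos (by linarith) (by linarith)) (by nlinarith)
    nlinarith
  linarith [P.isPGroup'.commProb_le hnc]

theorem stmt_11 {G : Type*} [Group G] [Finite G] (p : ℕ) [Fact p.Prime]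
    (hodd : Odd p) (P : Sylow p G)
    (hd : ((p : ℚ) + 1) / (2 * p) ≤ (kp p G : ℚ) / Nat.card ↥(P : Subgroup G)) :
    IsMulCommutative ↥(P : Subgroup G) :=
  stmt_11_general p P hd
end

section
/- Let G be a finite group of odd order and σ a nonempty set of primes with d_σ(G) ≥ 1/2. If G is a Frobenius group with elementary abelian kernel N of order p^k (p odd) and cyclic complement of prime order r ≠ p with r dividing p^k − 1, then d_p(G) = 1/r + (r−1)/(r p^k) and this quantity is strictly less than 1/2; hence no such Frobenius group satisfies d_p(G) ≥ 1/2. -/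
section

variable {G : Type*} [Group G]

theorem ConjClasses.carrier_one : (1 : ConjClasses G).carrier = {1} := by
  ext x
  rw [ConjClasses.one_eq_mk_one, ConjClasses.mem_carrier_iff_mk_eq,
    ConjClasses.mk_eq_mk_iff_isConj, isConj_one_left, Set.mem_singleton_iff]

abbrev ConjClassesIn (N : Subgroup G) : Type _ := {c : ConjClasses G // c.carrier ⊆ N}

instance (N : Subgroup G) : One (ConjClassesIn N) :=
  ⟨⟨1, by rw [ConjClasses.carrier_one, Set.singleton_subset_iff]; exact N.one_mem⟩⟩

namespace Subgroup

variable {N : Subgroup G}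

theorem mem_of_coprime_orderOf_index [N.Normal] {g : G}
    (h : (orderOf g).Coprime N.index) : g ∈ N := by
  rw [← QuotientGroup.eq_one_iff, ← orderOf_eq_one_iff, ← Nat.dvd_one, ← h.gcd_eq_one]
  exact Nat.dvd_gcd (orderOf_map_dvd (QuotientGroup.mk' N) g)
    (N.index_eq_card ▸ _root_.orderOf_dvd_natCard _)

theorem index_centralizer_singleton (g : G) :
    (centralizer {g}).index = Nat.card (ConjClasses.mk g).carrier := by
  have h : (centralizer {g}).index = (MulAction.stabilizer (ConjAct G) g).index := by
    rw [centralizer_eq_comap_stabilizer]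
    exact index_comap_of_surjective _ ConjAct.toConjAct.surjective
  rw [h, MulAction.index_stabilizer, ConjAct.orbit_eq_carrier_conjClasses, Nat.card_coe_set_eq]

def equivSigmaConjClassesIn (N : Subgroup G) [N.Normal] :
    N ≃ Σ c : ConjClassesIn N, c.1.carrier where
  toFun x := ⟨⟨ConjClasses.mk x, fun y hy => by
    obtain ⟨g, rfl⟩ := isConj_iff.mp (ConjClasses.mk_eq_mk_iff_isConj.mp
      (ConjClasses.mem_carrier_iff_mk_eq.mp hy)).symm
    exact ‹N.Normal›.conj_mem x x.2 g⟩, ⟨x, ConjClasses.mem_carrier_mk⟩⟩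
  invFun y := ⟨y.2, y.1.2 y.2.2⟩
  left_inv _ := rfl
  right_inv := fun ⟨_, y⟩ =>
    Sigma.subtype_ext (Subtype.ext (ConjClasses.mem_carrier_iff_mk_eq.mp y.2)) rfl

theorem card_eq_one_add_mul_index [Finite G] [N.Normal]
    (hN : ∀ x ∈ N, x ≠ 1 → centralizer {x} = N) :
    Nat.card N = 1 + (Nat.card (ConjClassesIn N) - 1) * N.index := by
  classical
  have := Fintype.ofFinite (ConjClassesIn N)
  have hcard : ∀ c : ConjClassesIn N, c ≠ 1 → Nat.card c.1.carrier = N.index := by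
    rintro ⟨c, hc⟩ hne
    obtain ⟨x, rfl⟩ := ConjClasses.mk_surjective c
    rw [← index_centralizer_singleton, hN x (hc ConjClasses.mem_carrier_mk)]
    rintro rfl
    exact hne (Subtype.ext ConjClasses.one_eq_mk_one.symm)
  rw [Nat.card_congr N.equivSigmaConjClassesIn, Nat.card_sigma,
    ← Finset.add_sum_erase _ _ (Finset.mem_univ 1),
    Finset.sum_const_nat fun c hc => hcard c (Finset.ne_of_mem_erase hc),
    Finset.card_erase_of_mem (Finset.mem_univ _), Finset.card_univ, Fintype.card_eq_nat_card,
    show ((1 : ConjClassesIn N) : ConjClasses G).carrier = {1} from ConjClasses.carrier_one,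
    Nat.card_unique]

end Subgroup

theorem IsPGroup.exists_orderOf_eq_pow_iff_mem {p : ℕ} [Fact p.Prime] {N : Subgroup G}
    [N.Normal] (hN : IsPGroup p N) (hindex : N.index.Coprime p) (g : G) :
    (∃ n, orderOf g = p ^ n) ↔ g ∈ N := by
  refine ⟨fun ⟨n, hn⟩ => N.mem_of_coprime_orderOf_index ?_, fun hg => ?_⟩
  · exact hn ▸ (hindex.pow_right n).symm
  · obtain ⟨n, hn⟩ := IsPGroup.iff_orderOf.mp hN ⟨g, hg⟩
    exact ⟨n, Subgroup.orderOf_mk g hg ▸ hn⟩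

end

theorem add_one_div_eq_of_eq_one_add_mul {P r m : ℕ} (hr : r ≠ 0) (h : P = 1 + m * r) :
    ((m : ℚ) + 1) / P = 1 / r + (r - 1) / (r * P) := by
  subst h
  push_cast
  field_simp
  ring

theorem add_one_div_lt_half_of_eq_one_add_mul {P r m : ℕ} (hP : Odd P) (hP1 : P ≠ 1)
    (hr : 3 ≤ r) (hrodd : Odd r) (h : P = 1 + m * r) : ((m : ℚ) + 1) / P < 1 / 2 := by
  have hmr : Even (m * r) := by simpa [h, parity_simps] using hP
  obtain ⟨t, rfl⟩ := (Nat.even_mul.mp hmr).resolve_right (Nat.not_even_iff_odd.mpr hrodd)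
  have ht : t ≠ 0 := by rintro rfl; simp_all
  have hlt : (t + t + 1) * 2 < P := by subst h; nlinarith [Nat.one_le_iff_ne_zero.mpr ht]
  rw [div_lt_div_iff₀ (by exact_mod_cast hP.pos) two_pos, one_mul]
  exact_mod_cast hlt

theorem stmt_17_general {G : Type*} [Group G] [Finite G] (p r k : ℕ)
    (hp : p.Prime) (hpodd : Odd p) (hr : r.Prime) (hrodd : Odd r) (hpr : r ≠ p)
    (hk : 1 ≤ k)
    (N : Subgroup G) (hNnorm : N.Normal) (hNcard : Nat.card N = p ^ k)
    (hindex : N.index = r)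
    (hfrob : ∀ x ∈ N, x ≠ 1 → Subgroup.centralizer {x} = N) :
    (kp p G : ℚ) / p ^ k = 1 / r + (r - 1) / (r * p ^ k) ∧
      (kp p G : ℚ) / p ^ k < 1 / 2 := by
  have := Fact.mk hp
  have hr3 : 3 ≤ r := hr.two_le.lt_of_ne (by rintro rfl; exact absurd hrodd (by decide))
  have hpN := (IsPGroup.of_card hNcard).exists_orderOf_eq_pow_iff_mem
    (hindex ▸ (Nat.coprime_primes hr hp).mpr hpr)
  have hkp : kp p G = Nat.card (ConjClassesIn N) :=
    Nat.card_congr (Equiv.subtypeEquivRight fun c => forall₂_congr fun g _ => hpN g)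
  obtain ⟨m, hm⟩ := Nat.exists_eq_add_one.mpr (Nat.card_pos (α := ConjClassesIn N))
  have hcount := N.card_eq_one_add_mul_index hfrob
  rw [hNcard, hindex, hm, Nat.add_sub_cancel] at hcount
  have hkpQ : (kp p G : ℚ) = m + 1 := by rw [hkp, hm]; push_cast; rfl
  rw [hkpQ, show (p : ℚ) ^ k = ((p ^ k : ℕ) : ℚ) by push_cast; rfl]
  exact ⟨add_one_div_eq_of_eq_one_add_mul hr.ne_zero hcount,
    add_one_div_lt_half_of_eq_one_add_mul hpodd.pow (Nat.one_lt_pow (by omega) hp.one_lt).ne'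
      hr3 hrodd hcount⟩

theorem stmt_17 {G : Type*} [Group G] [Finite G] (p r k : ℕ)
    (hp : p.Prime) (hpodd : Odd p) (hr : r.Prime) (hrodd : Odd r) (hpr : r ≠ p)
    (hk : 1 ≤ k) (hdvd : r ∣ p ^ k - 1) (hGodd : Odd (Nat.card G))
    (N : Subgroup G) (hNnorm : N.Normal) (hNcard : Nat.card N = p ^ k)
    (hNab : IsMulCommutative N) (hNelem : ∀ x ∈ N, x ^ p = 1)
    (hindex : N.index = r)
    (hfrob : ∀ x ∈ N, x ≠ 1 → Subgroup.centralizer {x} = N) :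
    (kp p G : ℚ) / p ^ k = 1 / r + (r - 1) / (r * p ^ k) ∧
      (kp p G : ℚ) / p ^ k < 1 / 2 :=
  stmt_17_general p r k hp hpodd hr hrodd hpr hk N hNnorm hNcard hindex hfrob
end
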